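/- Let a, b, σ, T > 0, set γ = √(a² + 2σ²), and for t ∈ [0,T] define D(t) = (γ − a) + (γ + a)·exp(γ(T − t)), B(t) = 2(1 − exp(γ(T − t)))/D(t), A(t) = (2γ·exp((γ + a)(T − t)/2)/D(t))^(2ab/σ²), and u(t,x) = A(t)·exp(B(t)·x). Then u(T,x) = 1 for all x ∈ ℝ, and for all (t,x) ∈ [0,T] × ℝ the function u satisfies the partial differential equation ∂ₜu(t,x) + a(b − x)·∂ₓu(t,x) + (σ²/2)·x·∂ₓₓu(t,x) − x·u(t,x) = 0. -/

import Mathlib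

open Real

/-! Substituting `u = A · exp (B x)` splits the PDE into the Riccati equation
`B' = a B - σ² B² / 2 + 1` and `A' = -a b A B`, with `B (T) = 0`, `A (T) = 1`.
With `E = exp (γ (T - t))`, the Riccati equation is linearised by `B = 2 (1 - E) / D`, the identity
`γ² - a² = 2σ²` being exactly what makes the quadratic terms match; and `A = G ^ (2ab/σ²)`
where the base `G = 2γ exp ((γ + a)(T - t)/2) / D` has logarithmic derivative `-σ² B / 2`. -/

theorem HasDerivAt.rpow_const_of_logDeriv {G : ℝ → ℝ} {k p t : ℝ}
    (hG : HasDerivAt G (k * G t) t) (hpos : 0 < G t) :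
    HasDerivAt (fun s => G s ^ p) (p * k * G t ^ p) t := by
  refine (hG.rpow_const (p := p) (Or.inl hpos.ne')).congr_deriv ?_
  rw [rpow_sub_one hpos.ne']
  field_simp

theorem hasDerivAt_exp_mul_sub (c T t : ℝ) :
    HasDerivAt (fun s => exp (c * (T - s))) (-c * exp (c * (T - t))) t :=
  (((hasDerivAt_id' t).const_sub T).const_mul c).exp.congr_deriv (by ring)

noncomputable def cirBondOperator (a b σ : ℝ) (u : ℝ → ℝ → ℝ) (t x : ℝ) : ℝ :=
  deriv (fun s => u s x) t + a * (b - x) * deriv (fun y => u t y) x +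
    σ ^ 2 / 2 * x * deriv (deriv (fun y => u t y)) x - x * u t x

theorem cirBondOperator_affine_exp_eq_zero {A B : ℝ → ℝ} {a b σ t x : ℝ}
    (hA : HasDerivAt A (-(a * b) * A t * B t) t)
    (hB : HasDerivAt B (a * B t - σ ^ 2 / 2 * B t ^ 2 + 1) t) :
    cirBondOperator a b σ (fun s y => A s * exp (B s * y)) t x = 0 := by
  have hspace : ∀ c k : ℝ, deriv (fun y => c * exp (k * y)) = fun y => c * k * exp (k * y) := by
    intro c k
    funext y
    exact ((((hasDerivAt_id' y).const_mul k).exp).const_mul c).deriv.trans (by ring)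
  have htime : HasDerivAt (fun s => A s * exp (B s * x))
      (-(a * b) * A t * B t * exp (B t * x) +
        A t * (exp (B t * x) * ((a * B t - σ ^ 2 / 2 * B t ^ 2 + 1) * x))) t :=
    hA.mul (hB.mul_const x).exp
  rw [cirBondOperator, htime.deriv, hspace, hspace]
  ring

noncomputable section

def cirDenom (a γ T t : ℝ) : ℝ := (γ - a) + (γ + a) * exp (γ * (T - t))

def cirB (a γ T t : ℝ) : ℝ := 2 * (1 - exp (γ * (T - t))) / cirDenom a γ T t

def cirBase (a γ T t : ℝ) : ℝ := 2 * γ * exp ((γ + a) * (T - t) / 2) / cirDenom a γ T t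

def cirA (a b σ γ T t : ℝ) : ℝ := cirBase a γ T t ^ (2 * a * b / σ ^ 2)

end

section

variable {a b σ γ T : ℝ}

theorem cirDenom_pos (h : |a| < γ) (t : ℝ) : 0 < cirDenom a γ T t := by
  obtain ⟨h₁, h₂⟩ := abs_lt.mp h
  unfold cirDenom
  have := exp_pos (γ * (T - t))
  nlinarith

theorem cirDenom_self : cirDenom a γ T T = 2 * γ := by
  simp [cirDenom]; ring

theorem hasDerivAt_cirDenom (t : ℝ) :
    HasDerivAt (cirDenom a γ T) (-(γ * (γ + a)) * exp (γ * (T - t))) t :=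
  (((hasDerivAt_exp_mul_sub γ T t).const_mul (γ + a)).const_add (γ - a)).congr_deriv (by ring)

theorem hasDerivAt_cirB (hγ : γ ^ 2 = a ^ 2 + 2 * σ ^ 2) (h : |a| < γ) (t : ℝ) :
    HasDerivAt (cirB a γ T) (a * cirB a γ T t - σ ^ 2 / 2 * cirB a γ T t ^ 2 + 1) t := by
  have hD := (cirDenom_pos (T := T) h t).ne'
  have := (((hasDerivAt_exp_mul_sub γ T t).const_sub 1).const_mul 2).div (hasDerivAt_cirDenom t) hD
  refine this.congr_deriv ?_
  unfold cirB
  field_simp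
  rw [cirDenom]
  linear_combination -(1 - exp (γ * (T - t))) ^ 2 * hγ

theorem hasDerivAt_cirBase (hγ : γ ^ 2 = a ^ 2 + 2 * σ ^ 2) (h : |a| < γ) (t : ℝ) :
    HasDerivAt (cirBase a γ T) (-(σ ^ 2 / 2) * cirB a γ T t * cirBase a γ T t) t := by
  have hD := (cirDenom_pos (T := T) h t).ne'
  have hn : HasDerivAt (fun s => 2 * γ * exp ((γ + a) * (T - s) / 2))
      (2 * γ * (-((γ + a) / 2) * exp ((γ + a) * (T - t) / 2))) t :=
    (((((hasDerivAt_id' t).const_sub T).const_mul (γ + a)).div_const 2).exp.const_mul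
      (2 * γ)).congr_deriv (by ring)
  refine (hn.div (hasDerivAt_cirDenom t) hD).congr_deriv ?_
  unfold cirB cirBase
  field_simp
  rw [cirDenom]
  linear_combination γ * (exp (γ * (T - t)) - 1) * hγ

theorem cirBase_pos (h : |a| < γ) (t : ℝ) : 0 < cirBase a γ T t := by
  have := cirDenom_pos (T := T) h t
  have : 0 < γ := (abs_nonneg a).trans_lt h
  unfold cirBase; positivity

theorem hasDerivAt_cirA (hσ : σ ≠ 0) (hγ : γ ^ 2 = a ^ 2 + 2 * σ ^ 2) (h : |a| < γ) (t : ℝ) :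
    HasDerivAt (cirA a b σ γ T) (-(a * b) * cirA a b σ γ T t * cirB a γ T t) t := by
  refine ((hasDerivAt_cirBase hγ h t).rpow_const_of_logDeriv (cirBase_pos h t)).congr_deriv ?_
  unfold cirA
  field_simp

theorem cirB_self : cirB a γ T T = 0 := by simp [cirB]

theorem cirA_self (hγ : γ ≠ 0) : cirA a b σ γ T T = 1 := by
  simp [cirA, cirBase, cirDenom_self, hγ]

end

theorem cir_bond_pde_general (a b σ T : ℝ) (hσ : 0 < σ)
    (γ : ℝ) (hγ : γ = Real.sqrt (a ^ 2 + 2 * σ ^ 2))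
    (D B A : ℝ → ℝ) (u : ℝ → ℝ → ℝ)
    (hD : ∀ t, D t = (γ - a) + (γ + a) * Real.exp (γ * (T - t)))
    (hB : ∀ t, B t = 2 * (1 - Real.exp (γ * (T - t))) / D t)
    (hA : ∀ t, A t =
      (2 * γ * Real.exp ((γ + a) * (T - t) / 2) / D t) ^ (2 * a * b / σ ^ 2))
    (hu : ∀ t x, u t x = A t * Real.exp (B t * x)) :
    (∀ x : ℝ, u T x = 1) ∧
    (∀ t ∈ Set.Icc (0 : ℝ) T, ∀ x : ℝ,
      deriv (fun s => u s x) t + a * (b - x) * deriv (fun y => u t y) x +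
        σ ^ 2 / 2 * x * deriv (deriv (fun y => u t y)) x - x * u t x = 0) := by
  obtain rfl : D = cirDenom a γ T := funext hD
  obtain rfl : B = cirB a γ T := funext hB
  obtain rfl : A = cirA a b σ γ T := funext hA
  obtain rfl : u = fun t x => cirA a b σ γ T t * exp (cirB a γ T t * x) := funext₂ hu
  have hγsq : γ ^ 2 = a ^ 2 + 2 * σ ^ 2 := by rw [hγ, sq_sqrt (by positivity)]
  have haγ : |a| < γ := by
    rw [hγ, ← sqrt_sq_eq_abs]
    exact sqrt_lt_sqrt (sq_nonneg a) (by linarith [pow_pos hσ 2])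
  refine ⟨fun x => ?_, fun t _ x => ?_⟩
  · simp [cirB_self, cirA_self ((abs_nonneg a).trans_lt haγ).ne']
  · exact cirBondOperator_affine_exp_eq_zero (hasDerivAt_cirA hσ.ne' hγsq haγ t)
      (hasDerivAt_cirB hγsq haγ t)

/-- The explicit function `u(t,x) = A(t)·exp(B(t)·x)` solves the CIR bond-pricing
PDE `∂ₜu + a(b - x)∂ₓu + (σ²/2)x∂ₓₓu - xu = 0` on `[0,T] × ℝ`, with `u(T,·) = 1`. -/
theorem cir_bond_pde (a b σ T : ℝ) (ha : 0 < a) (hb : 0 < b) (hσ : 0 < σ) (hT : 0 < T)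
    (γ : ℝ) (hγ : γ = Real.sqrt (a ^ 2 + 2 * σ ^ 2))
    (D B A : ℝ → ℝ) (u : ℝ → ℝ → ℝ)
    (hD : ∀ t, D t = (γ - a) + (γ + a) * Real.exp (γ * (T - t)))
    (hB : ∀ t, B t = 2 * (1 - Real.exp (γ * (T - t))) / D t)
    (hA : ∀ t, A t =
      (2 * γ * Real.exp ((γ + a) * (T - t) / 2) / D t) ^ (2 * a * b / σ ^ 2))
    (hu : ∀ t x, u t x = A t * Real.exp (B t * x)) :
    (∀ x : ℝ, u T x = 1) ∧
    (∀ t ∈ Set.Icc (0 : ℝ) T, ∀ x : ℝ,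
      deriv (fun s => u s x) t + a * (b - x) * deriv (fun y => u t y) x +
        σ ^ 2 / 2 * x * deriv (deriv (fun y => u t y)) x - x * u t x = 0) :=
  cir_bond_pde_general a b σ T hσ γ hγ D B A u hD hB hA hu
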